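/- arXiv:math/0004083 — 3 statements merged into one kernel-verified Lean document; each statement's English description precedes it below -/
import Mathlib

section
/- With p + q = 1 and p > q > 0, for integers a1 < b1 < a3 < b3 < a2 < b2 with k = a3 - b1, l = b3 - a3, m = a2 - b3 all positive, the 3×3 determinant det [[W(a1,b1), W(a1,b2), W(a1,b3)], [W(a2,b1), W(a2,b2), W(a2,b3)], [W(a3,b1), W(a3,b2), W(a3,b3)]] equals (p-q)^{-3} (1 - (q/p)^k)(1 - (q/p)^m). -/
/-- Walk generating function of the Bernoulli walk on ℤ:
`W(a,b) = (p-q)⁻¹` if `b - a ≥ 0`, and `(p-q)⁻¹ (p/q)^(b-a)` otherwise. -/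
noncomputable def bernoulliWalk (p q : ℝ) (a b : ℤ) : ℝ :=
  if 0 ≤ b - a then (p - q)⁻¹ else (p - q)⁻¹ * (p / q) ^ (b - a)

/-! Rows `a1, a3` lie below every column except `b1`, and row `a2` lies between the columns,
so the minor has the shape `c * [[1, 1, 1], [u, 1, v], [w, 1, 1]]`, whose determinant
`(1 - v)(1 - w)` does not depend on the entry `u = W(a2, b1) / c`. -/

theorem bernoulliWalk_of_le {p q : ℝ} {a b : ℤ} (hab : a ≤ b) :
    bernoulliWalk p q a b = (p - q)⁻¹ :=
  if_pos (sub_nonneg.mpr hab)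

theorem bernoulliWalk_of_lt {p q : ℝ} {a b : ℤ} (hba : b < a) :
    bernoulliWalk p q a b = (p - q)⁻¹ * (q / p) ^ (a - b) := by
  rw [bernoulliWalk, if_neg (by omega), ← inv_div, inv_zpow, ← zpow_neg, neg_sub]

theorem Matrix.det_fin_three_of_const_middle_col {R : Type*} [CommRing R] (c u v w : R) :
    !![c, c, c; c * u, c, c * v; c * w, c, c].det = c ^ 3 * (1 - w) * (1 - v) := by
  rw [Matrix.det_fin_three]
  simp only [Matrix.of_apply, Matrix.cons_val', Matrix.cons_val_zero, Matrix.cons_val_one,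
    Matrix.cons_val_two, Matrix.head_cons, Matrix.tail_cons, Matrix.empty_val',
    Matrix.cons_val_fin_one, Matrix.head_fin_const]
  ring

theorem stmt5_general (p q : ℝ)
    (a1 b1 a3 b3 a2 b2 k m : ℤ)
    (h1 : a1 < b1) (h2 : b1 < a3) (h3 : a3 < b3) (h4 : b3 < a2) (h5 : a2 < b2)
    (hk : k = a3 - b1) (hm : m = a2 - b3) :
    Matrix.det
        !![bernoulliWalk p q a1 b1, bernoulliWalk p q a1 b2, bernoulliWalk p q a1 b3;
           bernoulliWalk p q a2 b1, bernoulliWalk p q a2 b2, bernoulliWalk p q a2 b3;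
           bernoulliWalk p q a3 b1, bernoulliWalk p q a3 b2, bernoulliWalk p q a3 b3] =
      ((p - q) ^ 3)⁻¹ * (1 - (q / p) ^ k) * (1 - (q / p) ^ m) := by
  rw [bernoulliWalk_of_le (by omega : a1 ≤ b1), bernoulliWalk_of_le (by omega : a1 ≤ b2),
    bernoulliWalk_of_le (by omega : a1 ≤ b3), bernoulliWalk_of_lt (by omega : b1 < a2),
    bernoulliWalk_of_le (by omega : a2 ≤ b2), bernoulliWalk_of_lt (by omega : b3 < a2),
    bernoulliWalk_of_lt (by omega : b1 < a3), bernoulliWalk_of_le (by omega : a3 ≤ b2),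
    bernoulliWalk_of_le (by omega : a3 ≤ b3), Matrix.det_fin_three_of_const_middle_col,
    inv_pow, hk, hm]

/-- For `a1 < b1 < a3 < b3 < a2 < b2` with `k = a3 - b1`, `l = b3 - a3`,
`m = a2 - b3` all positive, the 3×3 minor of the Bernoulli walk matrix with
rows `a1, a2, a3` and columns `b1, b2, b3` equals
`(p-q)⁻³ (1 - (q/p)^k)(1 - (q/p)^m)`. -/
theorem stmt5 (p q : ℝ) (hpq : p + q = 1) (hq : 0 < q) (h : q < p)
    (a1 b1 a3 b3 a2 b2 k l m : ℤ)
    (h1 : a1 < b1) (h2 : b1 < a3) (h3 : a3 < b3) (h4 : b3 < a2) (h5 : a2 < b2)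
    (hk : k = a3 - b1) (hl : l = b3 - a3) (hm : m = a2 - b3) :
    Matrix.det
        !![bernoulliWalk p q a1 b1, bernoulliWalk p q a1 b2, bernoulliWalk p q a1 b3;
           bernoulliWalk p q a2 b1, bernoulliWalk p q a2 b2, bernoulliWalk p q a2 b3;
           bernoulliWalk p q a3 b1, bernoulliWalk p q a3 b2, bernoulliWalk p q a3 b3] =
      ((p - q) ^ 3)⁻¹ * (1 - (q / p) ^ k) * (1 - (q / p) ^ m) :=
  stmt5_general p q a1 b1 a3 b3 a2 b2 k m h1 h2 h3 h4 h5 hk hm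
end

section
/- Concatenation with an initial self-avoiding prefix: let π be a walk from a to b and v a vertex on LE(π). Then π admits a unique decomposition π = π'(v) · π''(v) into a walk π'(v) from a to v and a walk π''(v) from v to b such that (a) the last edge of π'(v) belongs to LE(π'(v)) (or π'(v) is trivial when v = a), and (b) π''(v) visits no vertex of LE(π'(v)) except v. -/
/-!
Induct on the walk `a :: l`. For `v = a` only the trivial split works: a nontrivial prefix
`a … a` loop-erases to `[a]`, so its last edge does not contribute. For `v ≠ a`, condition (b)
keeps `a` out of `π''`, so the split lies after the last visit to `a`. Loop erasure does not
see a loop `a … a` at the start of a walk, so splits of `a :: l` at `v` correspond to splits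
of `l` when `a ∉ l`, and to splits of the shorter walk with that loop cut out otherwise.
-/

variable {V : Type*} [DecidableEq V]

/-- Loop erasure of a walk, recorded as its vertex sequence: keep the first
vertex, jump past its last occurrence, and continue.  This produces the same
self-avoiding walk as repeatedly erasing the first loop. -/
def loopErase : List V → List V
  | [] => []
  | a :: l => a :: loopErase ((l.reverse.takeWhile (· ≠ a)).reverse)
termination_by l => l.length
decreasing_by
  simp only [List.length_reverse, List.length_cons]
  exact Nat.lt_succ_of_le ((List.Sublist.length_le (List.takeWhile_sublist _)).trans (by simp))

theorem ExistsUnique.of_forall_iff_exists {α β : Type*} {P : α → Prop} {Q : β → Prop}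
    {f : β → α} (hQ : ∃! y, Q y) (h : ∀ x, P x ↔ ∃ y, Q y ∧ f y = x) : ∃! x, P x := by
  obtain ⟨y, hy, huniq⟩ := hQ
  refine ⟨f y, (h _).2 ⟨y, hy, rfl⟩, fun x hx => ?_⟩
  obtain ⟨y', hy', rfl⟩ := (h x).1 hx
  rw [huniq y' hy']

theorem List.takeWhile_append_cons_of_neg {α : Type*} {p : α → Bool} {x : α} (hx : ¬p x)
    (l r : List α) : (l ++ x :: r).takeWhile p = l.takeWhile p := by
  induction l with
  | nil => exact takeWhile_cons_of_neg hx
  | cons y l ih => simp only [cons_append, takeWhile_cons, ih]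

open List

@[simp]
theorem loopErase_nil : loopErase ([] : List V) = [] := by
  rw [loopErase]

theorem loopErase_cons (a : V) (l : List V) :
    loopErase (a :: l) = a :: loopErase ((l.reverse.takeWhile (· ≠ a)).reverse) := by
  rw [loopErase]

@[simp]
theorem loopErase_singleton (a : V) : loopErase [a] = [a] := by
  simp [loopErase_cons]

theorem loopErase_cons_of_not_mem {a : V} {l : List V} (h : a ∉ l) :
    loopErase (a :: l) = a :: loopErase l := by
  rw [loopErase_cons, takeWhile_eq_self_iff.2 fun x hx => by
    simpa using ne_of_mem_of_not_mem (mem_reverse.1 hx) h, reverse_reverse]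

theorem loopErase_cons_append_cons (a : V) (w s : List V) :
    loopErase (a :: (w ++ a :: s)) = loopErase (a :: s) := by
  rw [loopErase_cons, loopErase_cons, reverse_append, reverse_cons, append_assoc,
    singleton_append, takeWhile_append_cons_of_neg (p := (· ≠ a)) (by simp)]

/-- `π'(v) = p.1 ++ [v]` and `π''(v) = v :: p.2`. Condition (a) becomes
`loopErase (p.1 ++ [v]) = loopErase p.1 ++ [v]`, which also covers the trivial `π'(v) = [v]`. -/
def IsLoopErasureSplit (l : List V) (v : V) (p : List V × List V) : Prop :=
  l = p.1 ++ v :: p.2 ∧ loopErase (p.1 ++ [v]) = loopErase p.1 ++ [v] ∧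
    ∀ u ∈ p.2, u ∈ loopErase p.1 → u = v

theorem IsLoopErasureSplit.exists_fst_eq_cons {a v : V} {l : List V} {p : List V × List V}
    (h : IsLoopErasureSplit (a :: l) v p) (hva : v ≠ a) : ∃ q, p.1 = a :: q := by
  rcases cons_eq_append_iff.1 h.1 with ⟨-, hv⟩ | ⟨q, hq, -⟩
  · exact absurd (cons_eq_cons.1 hv).1 hva
  · exact ⟨q, hq⟩

theorem existsUnique_isLoopErasureSplit_cons_self (a : V) (l : List V) :
    ∃! p, IsLoopErasureSplit (a :: l) a p := by
  refine ⟨([], l), ⟨rfl, by simp, by simp⟩, ?_⟩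
  rintro ⟨_ | ⟨b, r⟩, p₂⟩ ⟨hl, hlast, -⟩
  · simp_all
  · obtain rfl : b = a := (cons_eq_cons.1 hl).1.symm
    rw [cons_append, loopErase_cons_append_cons, loopErase_singleton, loopErase_cons] at hlast
    simp at hlast

theorem isLoopErasureSplit_cons_cons_iff {a v : V} {l q p₂ : List V} (hl : l = q ++ v :: p₂)
    (ha : a ∉ l) :
    IsLoopErasureSplit (a :: l) v (a :: q, p₂) ↔ IsLoopErasureSplit l v (q, p₂) := by
  simp only [hl, mem_append, mem_cons, not_or] at ha
  obtain ⟨haq, hav, hap⟩ := ha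
  have haqv : a ∉ q ++ [v] := by simp [haq, hav]
  simp only [IsLoopErasureSplit, cons_append, loopErase_cons_of_not_mem haqv,
    loopErase_cons_of_not_mem haq, cons_inj_right, mem_cons]
  exact and_congr_right fun _ => and_congr_right fun _ =>
    forall₂_congr fun u hu => by simp [ne_of_mem_of_not_mem hu hap]

theorem isLoopErasureSplit_cons_iff {a v : V} {l : List V} {p : List V × List V} (hva : v ≠ a)
    (ha : a ∉ l) :
    IsLoopErasureSplit (a :: l) v p ↔ ∃ q, IsLoopErasureSplit l v q ∧ (a :: q.1, q.2) = p := by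
  constructor
  · intro h
    obtain ⟨q, hq⟩ := h.exists_fst_eq_cons hva
    obtain ⟨r, p₂⟩ := p
    subst hq
    exact ⟨(q, p₂), (isLoopErasureSplit_cons_cons_iff (cons_eq_cons.1 h.1).2 ha).1 h, rfl⟩
  · rintro ⟨⟨q, p₂⟩, hq, rfl⟩
    exact (isLoopErasureSplit_cons_cons_iff hq.1 ha).2 hq

theorem isLoopErasureSplit_cons_append_cons_iff (a v : V) (w s q p₂ : List V) :
    IsLoopErasureSplit (a :: (w ++ a :: s)) v (a :: (w ++ a :: q), p₂) ↔
      IsLoopErasureSplit (a :: s) v (a :: q, p₂) := by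
  simp only [IsLoopErasureSplit, cons_append, append_assoc, loopErase_cons_append_cons,
    cons_inj_right, append_cancel_left_eq]

theorem isLoopErasureSplit_cons_append_cons_iff_exists {a v : V} {w s : List V}
    {p : List V × List V} (hva : v ≠ a) :
    IsLoopErasureSplit (a :: (w ++ a :: s)) v p ↔
      ∃ q, IsLoopErasureSplit (a :: s) v q ∧ (a :: (w ++ q.1), q.2) = p := by
  constructor
  · intro h
    obtain ⟨t, ht⟩ := h.exists_fst_eq_cons hva
    obtain ⟨r, p₂⟩ := p
    subst ht
    have hap : a ∉ p₂ := fun ha =>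
      hva (h.2.2 a ha (by rw [loopErase_cons]; exact mem_cons_self)).symm
    rcases append_eq_append_iff.1 (cons_eq_cons.1 h.1).2 with ⟨x, rfl, hx⟩ | ⟨x, -, hx⟩
    · obtain ⟨x, rfl, -⟩ := (cons_eq_append_iff.1 hx).resolve_left fun ⟨_, hv⟩ =>
        hva (cons_eq_cons.1 hv).1
      exact ⟨(a :: x, p₂), (isLoopErasureSplit_cons_append_cons_iff a v w s x p₂).1 h, rfl⟩
    · have : a ∈ v :: p₂ := hx ▸ mem_append_right x mem_cons_self
      exact absurd ((mem_cons.1 this).resolve_right hap).symm hva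
  · rintro ⟨⟨q, p₂⟩, hq, rfl⟩
    obtain ⟨q, rfl⟩ := hq.exists_fst_eq_cons hva
    exact (isLoopErasureSplit_cons_append_cons_iff a v w s q p₂).2 hq

theorem existsUnique_isLoopErasureSplit : ∀ {l : List V} {v : V}, v ∈ loopErase l →
    ∃! p, IsLoopErasureSplit l v p
  | [], v, hv => by simp at hv
  | a :: l, v, hv => by
    by_cases hva : v = a
    · exact hva ▸ existsUnique_isLoopErasureSplit_cons_self a l
    by_cases ha : a ∈ l
    · obtain ⟨w, s, rfl⟩ := append_of_mem ha
      rw [loopErase_cons_append_cons] at hv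
      exact (existsUnique_isLoopErasureSplit hv).of_forall_iff_exists fun _ =>
        isLoopErasureSplit_cons_append_cons_iff_exists hva
    · rw [loopErase_cons_of_not_mem ha, mem_cons, or_iff_right hva] at hv
      exact (existsUnique_isLoopErasureSplit hv).of_forall_iff_exists fun _ =>
        isLoopErasureSplit_cons_iff hva ha
termination_by l => l.length

theorem exists_isLoopErasureSplit_iff {l : List V} {v : V} {p : List V × List V} :
    (∃ q, IsLoopErasureSplit l v q ∧ (q.1 ++ [v], q.2) = p) ↔
      l = p.1 ++ p.2 ∧ p.1.getLast? = some v ∧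
        (p.1 = [v] ∨ loopErase p.1 = loopErase p.1.dropLast ++ [v]) ∧
        ∀ u ∈ v :: p.2, u ∈ loopErase p.1 → u = v := by
  constructor
  · rintro ⟨⟨r, p₂⟩, ⟨hl, hr, hp₂⟩, rfl⟩
    refine ⟨by simp [hl], getLast?_concat, Or.inr (by rw [dropLast_concat, hr]), ?_⟩
    intro u hu hmem
    rw [hr, mem_append, mem_singleton] at hmem
    rcases mem_cons.1 hu with rfl | hu
    · rfl
    · exact hmem.elim (hp₂ u hu) id
  · obtain ⟨p₁, p₂⟩ := p
    rintro ⟨hl, hlast, hcontrib, havoid⟩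
    obtain ⟨r, rfl⟩ := getLast?_eq_some_iff.1 hlast
    have hr : loopErase (r ++ [v]) = loopErase r ++ [v] := by
      rcases hcontrib with h | h
      · obtain rfl : r = [] := by simpa using h
        simp
      · rwa [dropLast_concat] at h
    refine ⟨(r, p₂), ⟨by simpa using hl, hr, fun u hu hmem => ?_⟩, rfl⟩
    exact havoid u (mem_cons_of_mem _ hu) (hr ▸ mem_append_left _ hmem)

/-- `π'(v)` is the list `p.1` (ending in `v`) and `π''(v)` is the walk `v :: p.2`, so that `π`
is the list `p.1 ++ p.2`. -/
theorem stmt17_general {V : Type*} [DecidableEq V]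
    (l : List V) (v : V) (hv : v ∈ loopErase l) :
    ∃! p : List V × List V,
      l = p.1 ++ p.2 ∧
      p.1.getLast? = some v ∧
      (p.1 = [v] ∨ loopErase p.1 = loopErase p.1.dropLast ++ [v]) ∧
      (∀ u ∈ v :: p.2, u ∈ loopErase p.1 → u = v) :=
  (existsUnique_isLoopErasureSplit hv).of_forall_iff_exists fun _ =>
    exists_isLoopErasureSplit_iff.symm

/-- Splitting a walk at a vertex of its loop-erased part: if `v` lies on
`LE(π)`, then `π` decomposes uniquely as `π = π' · π''` with `π'` ending at
`v`, such that (a) the last edge of `π'` contributes to `LE(π')` (or `π'` is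
the trivial walk `[v]`), and (b) `π''` visits no vertex of `LE(π')` other
than `v`.  Here `π'` is recorded as the list `p.1` (ending in `v`) and `π''`
as the walk `v :: p.2`, so that `π` is the list `p.1 ++ p.2`. -/
theorem stmt17 {V : Type*} [DecidableEq V] (Adj : V → V → Prop)
    (l : List V) (hwalk : l.Chain' Adj) (v : V) (hv : v ∈ loopErase l) :
    ∃! p : List V × List V,
      l = p.1 ++ p.2 ∧
      p.1.getLast? = some v ∧
      (p.1 = [v] ∨ loopErase p.1 = loopErase p.1.dropLast ++ [v]) ∧
      (∀ u ∈ v :: p.2, u ∈ loopErase p.1 → u = v) :=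
  stmt17_general l v hv
end

section
/- Total positivity of 2×2 hitting matrices via loop-erased switching (finite acyclic-free case, 2×2, finite graph): Let Γ be a finite directed network with nonnegative real edge weights such that the walk matrix W = ∑_m Q^m converges (e.g., the spectral radius of Q is < 1). Suppose vertices a1, a2, b1, b2 are such that every walk from a1 to b2 shares a vertex with every walk from a2 to b1. Then W(a1,b1)W(a2,b2) - W(a1,b2)W(a2,b1) ≥ 0. -/
open List

namespace Stmt18

variable {V : Type*} [DecidableEq V]

/-- split a list at the last occurrence of `x`. -/
def rsplit (x : V) : List V → List V × List V
  | [] => ([], [])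
  | a :: l =>
    if x ∈ l then ((a :: (rsplit x l).1, (rsplit x l).2))
    else if a = x then ([], l) else ([], a :: l)

lemma rsplit_spec {x : V} : ∀ {l : List V}, x ∈ l →
    l = (rsplit x l).1 ++ x :: (rsplit x l).2 ∧ x ∉ (rsplit x l).2 := by
  intro l
  induction l with
  | nil => intro h; simp at h
  | cons a l ih =>
    intro h
    by_cases hl : x ∈ l
    · obtain ⟨h1, h2⟩ := ih hl
      simp only [rsplit, if_pos hl]
      exact ⟨by simpa using congrArg (a :: ·) h1, h2⟩
    · have hax : a = x := by
        rcases mem_cons.mp h with h' | h'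
        · exact h'.symm
        · exact absurd h' hl
      simp only [rsplit, if_neg hl, if_pos hax]
      exact ⟨by simp [hax], hl⟩

lemma rsplit_snd_length {x : V} : ∀ (l : List V), (rsplit x l).2.length ≤ l.length := by
  intro l
  induction l with
  | nil => simp [rsplit]
  | cons a l ih =>
    by_cases hl : x ∈ l
    · simp only [rsplit, if_pos hl]; exact ih.trans (by simp)
    · by_cases hax : a = x <;> simp [rsplit, hl, hax]

omit [DecidableEq V] in
/-- uniqueness of last-occurrence splittings -/
lemma split_unique {x : V} : ∀ {A₁ B₁ A₂ B₂ : List V},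
    A₁ ++ x :: B₁ = A₂ ++ x :: B₂ → x ∉ B₁ → x ∉ B₂ → A₁ = A₂ ∧ B₁ = B₂ := by
  intro A₁
  induction A₁ with
  | nil =>
    intro B₁ A₂ B₂ h h1 h2
    cases A₂ with
    | nil => simpa using h
    | cons a A₂ =>
      simp only [nil_append, cons_append, cons.injEq] at h
      exact absurd (h.2 ▸ (by simp : x ∈ A₂ ++ x :: B₂)) h1
  | cons a A₁ ih =>
    intro B₁ A₂ B₂ h h1 h2
    cases A₂ with
    | nil =>
      simp only [nil_append, cons_append, cons.injEq] at h
      exact absurd (h.2 ▸ (by simp : x ∈ A₁ ++ x :: B₁)) h2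
    | cons b A₂ =>
      simp only [cons_append, cons.injEq] at h
      obtain ⟨h3, h4⟩ := ih h.2 h1 h2
      exact ⟨by rw [h.1, h3], h4⟩

/-- loop erasure -/
def lew : List V → List V
  | [] => []
  | a :: l => a :: lew (if a ∈ l then (rsplit a l).2 else l)
termination_by l => l.length
decreasing_by
  simp only [List.length_cons]
  split
  · exact Nat.lt_succ_of_le (rsplit_snd_length l)
  · exact Nat.lt_succ_self _

@[simp] lemma lew_nil : lew ([] : List V) = [] := by rw [lew]

lemma lew_cons_of_not_mem {a : V} {l : List V} (h : a ∉ l) : lew (a :: l) = a :: lew l := by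
  rw [lew, if_neg h]

lemma lew_cons_eq {a : V} {l A B : List V} (h : l = A ++ a :: B) (hB : a ∉ B) :
    lew (a :: l) = a :: lew B := by
  have hm : a ∈ l := h ▸ by simp
  obtain ⟨h1, h2⟩ := rsplit_spec (l := l) hm
  rw [lew, if_pos hm]
  have := split_unique (h1.symm.trans h) h2 hB
  rw [this.2]

/-- unified decomposition -/
lemma lew_decomp (a : V) (l : List V) :
    ∃ A B : List V, a :: l = A ++ a :: B ∧ a ∉ B ∧ lew (a :: l) = a :: lew B ∧
      B.length ≤ l.length := by
  by_cases h : a ∈ l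
  · obtain ⟨h1, h2⟩ := rsplit_spec (l := l) h
    refine ⟨a :: (rsplit a l).1, (rsplit a l).2, by simpa using congrArg (a :: ·) h1, h2,
      lew_cons_eq h1 h2, rsplit_snd_length l⟩
  · exact ⟨[], l, rfl, h, lew_cons_of_not_mem h, le_rfl⟩

lemma lew_append_cons {a : V} {A M : List V} (hA : A = [] ∨ ∃ A', A = a :: A') (hM : a ∉ M) :
    lew (A ++ a :: M) = a :: lew M := by
  rcases hA with rfl | ⟨A', rfl⟩
  · exact lew_cons_of_not_mem hM
  · rw [cons_append]
    exact lew_cons_eq (rfl : A' ++ a :: M = A' ++ a :: M) hM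

lemma lew_ne_nil {a : V} {l : List V} : lew (a :: l) ≠ [] := by
  rw [lew]; simp

lemma lew_head? : ∀ (l : List V), (lew l).head? = l.head? := by
  intro l; cases l with
  | nil => simp
  | cons a l => rw [lew]; simp

private lemma lew_subset_aux : ∀ (n : ℕ) (l : List V), l.length ≤ n → ∀ v ∈ lew l, v ∈ l := by
  intro n
  induction n with
  | zero => intro l hl; rw [List.length_eq_zero_iff.mp (Nat.le_zero.mp hl)]; simp
  | succ n ih =>
    intro l hl v hv
    cases l with
    | nil => simpa using hv
    | cons a l =>
      obtain ⟨A, B, hdec, hB, hlew, hlen⟩ := lew_decomp a l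
      rw [hlew] at hv
      rcases mem_cons.mp hv with rfl | hv
      · simp
      · have : v ∈ B := ih B (by simp at hl; omega) v hv
        rw [hdec]; simp [this]

lemma lew_subset {l : List V} {v : V} (hv : v ∈ lew l) : v ∈ l :=
  lew_subset_aux l.length l le_rfl v hv

private lemma lew_getLast_aux : ∀ (n : ℕ) (l : List V), l.length ≤ n →
    (lew l).getLast? = l.getLast? := by
  intro n
  induction n with
  | zero => intro l hl; rw [List.length_eq_zero_iff.mp (Nat.le_zero.mp hl)]; simp
  | succ n ih =>
    intro l hl
    cases l with
    | nil => simp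
    | cons a l =>
      obtain ⟨A, B, hdec, hB, hlew, hlen⟩ := lew_decomp a l
      rw [hlew]
      cases B with
      | nil =>
        have h : (a :: l) = (A ++ [a]) := by simpa using hdec
        rw [h, getLast?_concat]; simp
      | cons b B' =>
        have h1 : (lew (b :: B')).getLast? = (b :: B').getLast? :=
          ih (b :: B') (by simp at hl hlen ⊢; omega)
        have h2 : (a :: lew (b :: B')).getLast? = (lew (b :: B')).getLast? := by
          cases hh : lew (b :: B') with
          | nil => exact absurd hh lew_ne_nil
          | cons c C => simp
        rw [h2, h1, hdec]
        rw [show A ++ a :: b :: B' = (A ++ [a]) ++ (b :: B') by simp, getLast?_append]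
        obtain ⟨y, hy⟩ := Option.isSome_iff_exists.mp (getLast?_isSome.mpr (cons_ne_nil b B'))
        simp [hy]

lemma lew_getLast? (l : List V) : (lew l).getLast? = l.getLast? :=
  lew_getLast_aux l.length l le_rfl

private lemma lew_chain_aux {R : V → V → Prop} : ∀ (n : ℕ) (l : List V), l.length ≤ n →
    l.Chain' R → (lew l).Chain' R := by
  intro n
  induction n with
  | zero => intro l hl; rw [List.length_eq_zero_iff.mp (Nat.le_zero.mp hl)]; simp
  | succ n ih =>
    intro l hl hc
    cases l with
    | nil => rw [lew_nil]; exact List.isChain_nil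
    | cons a l =>
      obtain ⟨A, B, hdec, hB, hlew, hlen⟩ := lew_decomp a l
      rw [hlew]
      have hsuf : (a :: B).Chain' R := hc.suffix (by rw [hdec]; exact suffix_append A (a :: B))
      have hcB : B.Chain' R := hsuf.tail
      unfold Chain'; rw [isChain_cons]
      constructor
      · intro y hy
        rw [lew_head?] at hy
        cases B with
        | nil => simp at hy
        | cons b B' =>
          simp only [head?_cons, Option.mem_def, Option.some.injEq] at hy
          subst hy
          exact (isChain_cons.mp hsuf).1 _ rfl
      · exact ih B (by simp at hl; omega) hcB

lemma lew_chain' {R : V → V → Prop} {l : List V} (hc : l.Chain' R) : (lew l).Chain' R :=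
  lew_chain_aux l.length l le_rfl hc

/-- MAIN structural lemma about the first vertex of the loop erasure lying in `q`. -/
private lemma main_aux {q : List V} : ∀ (n : ℕ) (p : List V), p.length ≤ n →
    ∀ {x : V} {E₁ E₂ : List V}, lew p = E₁ ++ x :: E₂ → (∀ e ∈ E₁, e ∉ q) → x ∈ q →
    ∃ P₁ P₂ : List V, p = P₁ ++ x :: P₂ ∧ x ∉ P₂ ∧ lew (P₁ ++ [x]) = E₁ ++ [x] ∧
      ∀ v ∈ P₂, v ∉ E₁ ∧ v ≠ x := by
  intro n
  induction n with
  | zero =>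
    intro p hp x E₁ E₂ hE _ _
    rw [List.length_eq_zero_iff.mp (Nat.le_zero.mp hp)] at hE
    simp at hE
  | succ n ih =>
    intro p hp x E₁ E₂ hE hE₁ hxq
    cases p with
    | nil => simp at hE
    | cons a l =>
      obtain ⟨A, B, hdec, hB, hlew, hlen⟩ := lew_decomp a l
      have hA : A = [] ∨ ∃ A', A = a :: A' := by
        cases A with
        | nil => exact Or.inl rfl
        | cons a₀ A' =>
          right
          have : a = a₀ := by
            have := hdec
            simp only [cons_append, cons.injEq] at this
            exact this.1
          exact ⟨A', by rw [this]⟩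
      cases E₁ with
      | nil =>
        -- x = a
        have hxa : x = a := by
          rw [hlew] at hE
          simp only [nil_append, cons.injEq] at hE
          exact hE.1.symm
        subst hxa
        refine ⟨A, B, hdec, hB, ?_, fun v hv => ⟨by simp, fun h => hB (h ▸ hv)⟩⟩
        rw [lew_append_cons hA (by simp)]
        simp
      | cons e E₁' =>
        have hea : e = a := by
          rw [hlew] at hE
          simp only [cons_append, cons.injEq] at hE
          exact hE.1.symm
        subst hea
        have haq : e ∉ q := hE₁ e (by simp)
        have hlewB : lew B = E₁' ++ x :: E₂ := by
          rw [hlew] at hE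
          simp only [cons_append, cons.injEq] at hE
          exact hE.2
        have hxe : x ≠ e := fun h => haq (h ▸ hxq)
        obtain ⟨P₁', P₂', hBdec, hxP₂', hlewP₁', hP₂'⟩ :=
          ih B (by simp at hp; omega) hlewB (fun v hv => hE₁ v (by simp [hv])) hxq
        have hP₁'B : ∀ v ∈ P₁', v ∈ B := fun v hv => hBdec ▸ (by simp [hv])
        have heP₁' : e ∉ P₁' ++ [x] := by
          intro h
          rcases mem_append.mp h with h | h
          · exact hB (hP₁'B e h)
          · simp at h; exact hxe h.symm
        refine ⟨A ++ e :: P₁', P₂', ?_, hxP₂', ?_, ?_⟩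
        · rw [hdec, hBdec]; simp
        · rw [append_assoc, cons_append, lew_append_cons hA heP₁', hlewP₁']
          simp
        · intro v hv
          obtain ⟨h1, h2⟩ := hP₂' v hv
          have hvB : v ∈ B := hBdec ▸ (by simp [hv])
          refine ⟨?_, h2⟩
          intro h
          rcases mem_cons.mp h with h | h
          · exact hB (h ▸ hvB)
          · exact h1 h

lemma main_lemma {q p : List V} {x : V} {E₁ E₂ : List V}
    (hE : lew p = E₁ ++ x :: E₂) (hE₁ : ∀ e ∈ E₁, e ∉ q) (hxq : x ∈ q) :
    ∃ P₁ P₂ : List V, p = P₁ ++ x :: P₂ ∧ x ∉ P₂ ∧ lew (P₁ ++ [x]) = E₁ ++ [x] ∧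
      ∀ v ∈ P₂, v ∉ E₁ ∧ v ≠ x :=
  main_aux p.length p le_rfl hE hE₁ hxq

/-- appending a part disjoint from the loop erasure extends the loop erasure. -/
private lemma lew_append_aux {B : List V} : ∀ (n : ℕ) (A : List V), A.length ≤ n → A ≠ [] →
    (∀ v ∈ B, v ∉ lew A) → ∃ d : List V, lew (A ++ B) = lew A ++ d ∧ ∀ v ∈ d, v ∈ B := by
  intro n
  induction n with
  | zero => intro A hA hne; exact absurd (List.length_eq_zero_iff.mp (Nat.le_zero.mp hA)) hne
  | succ n ih =>
    intro A hA hne hdisj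
    cases A with
    | nil => exact absurd rfl hne
    | cons a m =>
      obtain ⟨C, D, hdec, hD, hlew, hlen⟩ := lew_decomp a m
      have hC : C = [] ∨ ∃ C', C = a :: C' := by
        cases C with
        | nil => exact Or.inl rfl
        | cons c C' =>
          right
          have : a = c := by
            have := hdec; simp only [cons_append, cons.injEq] at this; exact this.1
          exact ⟨C', by rw [this]⟩
      have haB : a ∉ B := by
        intro h
        exact hdisj a h (hlew ▸ (by simp))
      have hstep : lew ((a :: m) ++ B) = a :: lew (D ++ B) := by
        rw [hdec, append_assoc, cons_append]
        exact lew_append_cons hC (by simp [hD, haB])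
      cases D with
      | nil =>
        refine ⟨lew B, ?_, fun v hv => lew_subset hv⟩
        rw [hstep, hlew]; simp
      | cons d0 D' =>
        have hdisj' : ∀ v ∈ B, v ∉ lew (d0 :: D') := by
          intro v hv hvl
          exact hdisj v hv (hlew ▸ (by simp [hvl]))
        obtain ⟨d, hd1, hd2⟩ := ih (d0 :: D') (by simp at hA hlen ⊢; omega) (cons_ne_nil _ _) hdisj'
        refine ⟨d, ?_, hd2⟩
        rw [hstep, hd1, hlew]; simp

lemma lew_append {A B : List V} (hne : A ≠ []) (hdisj : ∀ v ∈ B, v ∉ lew A) :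
    ∃ d : List V, lew (A ++ B) = lew A ++ d ∧ ∀ v ∈ d, v ∈ B :=
  lew_append_aux A.length A le_rfl hne hdisj

omit [DecidableEq V] in
lemma find?_eq_some_of {p : V → Bool} {x : V} {E₂ : List V} :
    ∀ {E₁ : List V}, (∀ e ∈ E₁, ¬ p e) → p x → (E₁ ++ x :: E₂).find? p = some x := by
  intro E₁
  induction E₁ with
  | nil => intro _ hx; simp [List.find?_cons_of_pos hx]
  | cons e E₁ ih =>
    intro hE hx
    rw [cons_append, List.find?_cons_of_neg (by simpa using hE e (by simp))]
    exact ih (fun v hv => hE v (by simp [hv])) hx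

omit [DecidableEq V] in
lemma find?_decomp {p : V → Bool} {x : V} : ∀ {l : List V}, l.find? p = some x →
    ∃ A B : List V, l = A ++ x :: B ∧ (∀ e ∈ A, ¬ p e) ∧ p x := by
  intro l
  induction l with
  | nil => intro h; simp at h
  | cons a l ih =>
    intro h
    by_cases ha : p a
    · rw [List.find?_cons_of_pos ha] at h
      obtain rfl : a = x := by simpa using h
      exact ⟨[], l, rfl, by simp, ha⟩
    · rw [List.find?_cons_of_neg (by simpa using ha)] at h
      obtain ⟨A, B, h1, h2, h3⟩ := ih h
      exact ⟨a :: A, B, by simp [h1], by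
        intro e he
        rcases mem_cons.mp he with rfl | he
        · simpa using ha
        · exact h2 e he, h3⟩

/-- the switching map -/
noncomputable def swapF (pq : List V × List V) : List V × List V :=
  match (lew pq.1).find? (fun v => decide (v ∈ pq.2)) with
  | none => pq
  | some x => ((rsplit x pq.1).1 ++ x :: (rsplit x pq.2).2,
               (rsplit x pq.2).1 ++ x :: (rsplit x pq.1).2)

lemma swapF_of_find {p q : List V} {x : V}
    (hf : (lew p).find? (fun v => decide (v ∈ q)) = some x) :
    swapF (p, q) = ((rsplit x p).1 ++ x :: (rsplit x q).2,
                    (rsplit x q).1 ++ x :: (rsplit x p).2) := by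
  simp only [swapF, hf]

lemma rsplit_eq {x : V} {l A B : List V} (h : l = A ++ x :: B) (hB : x ∉ B) :
    rsplit x l = (A, B) := by
  have hm : x ∈ l := h ▸ by simp
  obtain ⟨h1, h2⟩ := rsplit_spec (l := l) hm
  obtain ⟨e1, e2⟩ := split_unique (h1.symm.trans h) h2 hB
  exact Prod.ext e1 e2

/-- the key involution property -/
lemma swap_inv {p q : List V} {x : V}
    (hf : (lew p).find? (fun v => decide (v ∈ q)) = some x) :
    ∃ P₁ P₂ Q₁ Q₂ : List V, p = P₁ ++ x :: P₂ ∧ q = Q₁ ++ x :: Q₂ ∧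
      swapF (p, q) = (P₁ ++ x :: Q₂, Q₁ ++ x :: P₂) ∧
      swapF (P₁ ++ x :: Q₂, Q₁ ++ x :: P₂) = (p, q) := by
  obtain ⟨E₁, E₂, hE, hE₁, hx⟩ := find?_decomp hf
  have hxq : x ∈ q := by simpa using hx
  have hE₁' : ∀ e ∈ E₁, e ∉ q := by
    intro e he
    have := hE₁ e he
    simpa using this
  obtain ⟨P₁, P₂, hpdec, hxP₂, hlewP₁, hP₂⟩ := main_lemma hE hE₁' hxq
  have hxqmem : x ∈ q := hxq
  obtain ⟨hq1, hq2⟩ := rsplit_spec (l := q) hxqmem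
  set Q₁ := (rsplit x q).1
  set Q₂ := (rsplit x q).2
  have hrsp : rsplit x p = (P₁, P₂) := rsplit_eq hpdec hxP₂
  have hsw1 : swapF (p, q) = (P₁ ++ x :: Q₂, Q₁ ++ x :: P₂) := by
    rw [swapF_of_find hf, hrsp]
  -- second application
  have hQ₂q : ∀ v ∈ Q₂, v ∈ q := fun v hv => hq1 ▸ (by simp [hv])
  have hQ₁q : ∀ v ∈ Q₁, v ∈ q := fun v hv => hq1 ▸ (by simp [hv])
  have hdisj : ∀ v ∈ Q₂, v ∉ lew (P₁ ++ [x]) := by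
    intro v hv hvl
    rw [hlewP₁] at hvl
    rcases mem_append.mp hvl with h | h
    · exact hE₁' v h (hQ₂q v hv)
    · simp at h; exact hq2 (h ▸ hv)
  obtain ⟨d, hd1, hd2⟩ := lew_append (by simp) hdisj
  have hσ : P₁ ++ x :: Q₂ = (P₁ ++ [x]) ++ Q₂ := by simp
  have hlewσ : lew (P₁ ++ x :: Q₂) = E₁ ++ x :: d := by
    rw [hσ, hd1, hlewP₁]; simp
  have hfind2 : (lew (P₁ ++ x :: Q₂)).find? (fun v => decide (v ∈ Q₁ ++ x :: P₂)) = some x := by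
    rw [hlewσ]
    refine find?_eq_some_of ?_ (by simp)
    intro e he
    simp only [decide_eq_true_eq, mem_append, mem_cons, not_or]
    have heq : e ∉ q := hE₁' e he
    refine ⟨fun h => heq (hQ₁q e h), fun h => heq (h ▸ hxq), fun h => (hP₂ e ?_).1 he⟩
    · exact h
  have hrsσ : rsplit x (P₁ ++ x :: Q₂) = (P₁, Q₂) := rsplit_eq rfl hq2
  have hrsσ' : rsplit x (Q₁ ++ x :: P₂) = (Q₁, P₂) := rsplit_eq rfl hxP₂
  have hsw2 : swapF (P₁ ++ x :: Q₂, Q₁ ++ x :: P₂) = (p, q) := by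
    rw [swapF_of_find hfind2, hrsσ, hrsσ', ← hpdec, ← hq1]
  exact ⟨P₁, P₂, Q₁, Q₂, hpdec, hq1, hsw1, hsw2⟩

/-! ### Weights and walk sums -/

variable [Fintype V]

/-- weight of a walk -/
noncomputable def wt (Q : Matrix V V ℝ) : List V → ℝ
  | [] => 1
  | [_] => 1
  | a :: b :: l => Q a b * wt Q (b :: l)

variable {Q : Matrix V V ℝ}

lemma wt_nil : wt Q [] = 1 := rfl
lemma wt_single (a : V) : wt Q [a] = 1 := rfl
lemma wt_cons_cons (a b : V) (l : List V) : wt Q (a :: b :: l) = Q a b * wt Q (b :: l) := rfl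

lemma wt_nonneg (hQ : ∀ i j, 0 ≤ Q i j) : ∀ l : List V, 0 ≤ wt Q l
  | [] => by rw [wt_nil]; norm_num
  | [_] => by rw [wt_single]; norm_num
  | a :: b :: l => by rw [wt_cons_cons]; exact mul_nonneg (hQ a b) (wt_nonneg hQ (b :: l))

lemma wt_chain (hQ : ∀ i j, 0 ≤ Q i j) : ∀ {l : List V}, wt Q l ≠ 0 →
    l.Chain' (fun x y => 0 < Q x y)
  | [], _ => List.isChain_nil
  | [_], _ => List.isChain_singleton _
  | a :: b :: l, h => by
    rw [wt_cons_cons] at h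
    have h1 : Q a b ≠ 0 := fun hc => h (by rw [hc, zero_mul])
    have h2 := wt_chain hQ (l := b :: l) (fun hc => h (by rw [hc, mul_zero]))
    exact isChain_cons_cons.mpr ⟨lt_of_le_of_ne (hQ a b) (Ne.symm h1), h2⟩

lemma wt_append : ∀ (A : List V) (x : V) (B : List V),
    wt Q (A ++ x :: B) = wt Q (A ++ [x]) * wt Q (x :: B)
  | [], x, B => by simp [wt_single]
  | [a], x, B => by simp [wt_cons_cons, wt_single]
  | a :: a' :: A, x, B => by
    have := wt_append (a' :: A) x B
    simp only [cons_append, wt_cons_cons] at this ⊢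
    rw [this]; ring

/-- the finset of walks of length `n+1` (i.e. `n` steps) from `a` to `b` -/
noncomputable def walksN (n : ℕ) (a b : V) : Finset (List V) :=
  ((Finset.univ : Finset (Fin n → V)).image fun f => a :: List.ofFn f).filter
    fun l => l.getLast? = some b

lemma mem_walksN {n : ℕ} {a b : V} {l : List V} :
    l ∈ walksN n a b ↔ l.length = n + 1 ∧ l.head? = some a ∧ l.getLast? = some b := by
  simp only [walksN, Finset.mem_filter, Finset.mem_image, Finset.mem_univ, true_and]
  constructor
  · rintro ⟨⟨f, rfl⟩, h2⟩
    simp [h2]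
  · rintro ⟨h1, h2, h3⟩
    cases l with
    | nil => simp at h2
    | cons c t =>
      obtain rfl : c = a := by simpa using h2
      have ht : t.length = n := by simpa using h1
      subst ht
      exact ⟨⟨t.get, by simp [List.ofFn_get]⟩, h3⟩

lemma getLast?_cons_of_ne_nil {a : V} {l : List V} (h : l ≠ []) :
    (a :: l).getLast? = l.getLast? := by
  rw [show a :: l = [a] ++ l from rfl, getLast?_append]
  obtain ⟨y, hy⟩ := Option.isSome_iff_exists.mp (getLast?_isSome.mpr h)
  simp [hy]

lemma pow_apply_walks (hQ : ∀ i j, 0 ≤ Q i j) : ∀ (n : ℕ) (a b : V),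
    (Q ^ n) a b = ∑ l ∈ walksN n a b, wt Q l := by
  intro n
  induction n with
  | zero =>
    intro a b
    rw [pow_zero, Matrix.one_apply]
    by_cases hab : a = b
    · subst hab
      have : walksN 0 a a = {[a]} := by
        ext l
        simp only [mem_walksN, Finset.mem_singleton]
        constructor
        · rintro ⟨h1, h2, h3⟩
          cases l with
          | nil => simp at h1
          | cons c t =>
            have : t = [] := by simpa using h1
            subst this
            simpa using h2
        · rintro rfl; simp
      rw [this]; simp [wt_single]
    · have : walksN 0 a b = ∅ := by
        ext l
        simp only [mem_walksN, Finset.notMem_empty, iff_false]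
        rintro ⟨h1, h2, h3⟩
        cases l with
        | nil => simp at h1
        | cons c t =>
          have : t = [] := by simpa using h1
          subst this
          simp only [head?_cons, Option.some.injEq] at h2
          simp only [getLast?_singleton, Option.some.injEq] at h3
          exact hab (h2 ▸ h3 ▸ rfl)
      rw [this]; simp [hab]
  | succ n ih =>
    intro a b
    rw [pow_succ', Matrix.mul_apply]
    calc ∑ c, Q a c * (Q ^ n) c b
        = ∑ c, ∑ l ∈ walksN n c b, Q a c * wt Q l := by
          simp only [ih, Finset.mul_sum]
      _ = ∑ x ∈ Finset.univ.sigma (fun c => walksN n c b), Q a x.1 * wt Q x.2 :=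
          Finset.sum_sigma' _ _ _
      _ = ∑ l ∈ walksN (n + 1) a b, wt Q l := by
          refine Finset.sum_nbij' (fun x => a :: x.2)
            (fun l => ⟨l.tail.head?.getD a, l.tail⟩) ?_ ?_ ?_ ?_ ?_
          · rintro ⟨c, l⟩ hx
            simp only [Finset.mem_sigma, Finset.mem_univ, true_and] at hx
            obtain ⟨h1, h2, h3⟩ := mem_walksN.mp hx
            have hne : l ≠ [] := by intro h; rw [h] at h1; simp at h1
            refine mem_walksN.mpr ⟨by simp [h1], by simp, ?_⟩
            rw [getLast?_cons_of_ne_nil hne]; exact h3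
          · intro l hl
            obtain ⟨h1, h2, h3⟩ := mem_walksN.mp hl
            cases l with
            | nil => simp at h1
            | cons c t =>
              cases t with
              | nil => simp at h1
              | cons d t' =>
                simp only [Finset.mem_sigma, Finset.mem_univ, true_and, tail_cons]
                refine mem_walksN.mpr ⟨by simpa using h1, by simp, ?_⟩
                rw [← getLast?_cons_of_ne_nil (cons_ne_nil d t')]
                exact h3
          · rintro ⟨c, l⟩ hx
            simp only [Finset.mem_sigma, Finset.mem_univ, true_and] at hx
            obtain ⟨h1, h2, h3⟩ := mem_walksN.mp hx
            cases l with
            | nil => simp at h1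
            | cons d t =>
              obtain rfl : d = c := by simpa using h2
              simp
          · intro l hl
            obtain ⟨h1, h2, h3⟩ := mem_walksN.mp hl
            cases l with
            | nil => simp at h1
            | cons c t =>
              obtain rfl : c = a := by simpa using h2
              simp
          · rintro ⟨c, l⟩ hx
            simp only [Finset.mem_sigma, Finset.mem_univ, true_and] at hx
            obtain ⟨h1, h2, h3⟩ := mem_walksN.mp hx
            cases l with
            | nil => simp at h1
            | cons d t =>
              obtain rfl : d = c := by simpa using h2
              rw [wt_cons_cons]

/-- walks with at most `M-1` steps -/
noncomputable def walksLe (M : ℕ) (a b : V) : Finset (List V) :=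
  (Finset.range M).biUnion fun n => walksN n a b

lemma mem_walksLe {M : ℕ} {a b : V} {l : List V} :
    l ∈ walksLe M a b ↔
      l ≠ [] ∧ l.length ≤ M ∧ l.head? = some a ∧ l.getLast? = some b := by
  simp only [walksLe, Finset.mem_biUnion, Finset.mem_range, mem_walksN]
  constructor
  · rintro ⟨n, hn, h1, h2, h3⟩
    exact ⟨by intro h; rw [h] at h1; simp at h1, by omega, h2, h3⟩
  · rintro ⟨h0, h1, h2, h3⟩
    have : 0 < l.length := List.length_pos_iff.mpr h0
    exact ⟨l.length - 1, by omega, by omega, h2, h3⟩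

lemma sum_range_pow_apply (hQ : ∀ i j, 0 ≤ Q i j) (M : ℕ) (a b : V) :
    ∑ n ∈ Finset.range M, (Q ^ n) a b = ∑ l ∈ walksLe M a b, wt Q l := by
  rw [walksLe, Finset.sum_biUnion]
  · exact Finset.sum_congr rfl fun n _ => pow_apply_walks hQ n a b
  · intro m hm n hn hmn
    simp only [Function.onFun]
    rw [Finset.disjoint_left]
    intro l hl1 hl2
    have h1 := (mem_walksN.mp hl1).1
    have h2 := (mem_walksN.mp hl2).1
    exact hmn (by omega)

lemma head?_append_cons {x : V} (A B C : List V) :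
    (A ++ x :: B).head? = (A ++ x :: C).head? := by
  cases A <;> simp

lemma getLast?_append_cons {x : V} (A B : List V) :
    (A ++ x :: B).getLast? = (x :: B).getLast? := by
  rw [getLast?_append]
  obtain ⟨y, hy⟩ := Option.isSome_iff_exists.mp (getLast?_isSome.mpr (cons_ne_nil x B))
  simp [hy]

lemma key_ineq (hQ : ∀ i j, 0 ≤ Q i j) (a1 a2 b1 b2 : V)
    (hcross : ∀ l l' : List V,
      l.Chain' (fun x y => 0 < Q x y) → l'.Chain' (fun x y => 0 < Q x y) →
      l.head? = some a1 → l.getLast? = some b2 →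
      l'.head? = some a2 → l'.getLast? = some b1 →
      ∃ x, x ∈ l ∧ x ∈ l') (N : ℕ) :
    (∑ l ∈ walksLe N a1 b2, wt Q l) * (∑ l ∈ walksLe N a2 b1, wt Q l) ≤
    (∑ l ∈ walksLe (2 * N) a1 b1, wt Q l) * (∑ l ∈ walksLe (2 * N) a2 b2, wt Q l) := by
  classical
  set F : List V × List V → ℝ := fun z => wt Q z.1 * wt Q z.2 with hF
  set S : Finset (List V × List V) := walksLe N a1 b2 ×ˢ walksLe N a2 b1 with hS
  set T : Finset (List V × List V) := walksLe (2 * N) a1 b1 ×ˢ walksLe (2 * N) a2 b2 with hT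
  set S' : Finset (List V × List V) := S.filter (fun z => F z ≠ 0) with hS'
  have hmain : ∀ z ∈ S', swapF z ∈ T ∧ F (swapF z) = F z ∧ swapF (swapF z) = z := by
    rintro ⟨p, q⟩ hz
    rw [hS', Finset.mem_filter] at hz
    obtain ⟨hzS, hzne⟩ := hz
    rw [hS, Finset.mem_product] at hzS
    obtain ⟨hp, hq⟩ := hzS
    obtain ⟨hpne, hplen0, hphead0, hplast0⟩ := mem_walksLe.mp hp
    obtain ⟨hqne, hqlen0, hqhead0, hqlast0⟩ := mem_walksLe.mp hq
    have hplen : p.length ≤ N := hplen0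
    have hqlen : q.length ≤ N := hqlen0
    have hphead : p.head? = some a1 := hphead0
    have hplast : p.getLast? = some b2 := hplast0
    have hqhead : q.head? = some a2 := hqhead0
    have hqlast : q.getLast? = some b1 := hqlast0
    have hwtp : wt Q p ≠ 0 := fun h => hzne (by simp [hF, h])
    have hwtq : wt Q q ≠ 0 := fun h => hzne (by simp [hF, h])
    have hcp : p.Chain' (fun x y => 0 < Q x y) := wt_chain hQ hwtp
    have hcq : q.Chain' (fun x y => 0 < Q x y) := wt_chain hQ hwtq
    obtain ⟨x0, hx1, hx2⟩ := hcross (lew p) q (lew_chain' hcp) hcq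
      ((lew_head? p).trans hphead) ((lew_getLast? p).trans hplast) hqhead hqlast
    have hfindsome : ((lew p).find? (fun v => decide (v ∈ q))).isSome :=
      find?_isSome.mpr ⟨x0, hx1, by simpa using hx2⟩
    obtain ⟨x, hfind⟩ := Option.isSome_iff_exists.mp hfindsome
    obtain ⟨P₁, P₂, Q₁, Q₂, hpdec, hqdec, hsw, hsw2⟩ := swap_inv hfind
    have hFpres : F (swapF (p, q)) = F (p, q) := by
      rw [hsw]
      show wt Q (P₁ ++ x :: Q₂) * wt Q (Q₁ ++ x :: P₂) = wt Q p * wt Q q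
      rw [hpdec, hqdec, wt_append P₁ x Q₂, wt_append Q₁ x P₂, wt_append P₁ x P₂,
        wt_append Q₁ x Q₂]
      ring
    refine ⟨?_, hFpres, by rw [hsw]; rw [hsw2]⟩
    -- membership in T
    rw [hsw, hT, Finset.mem_product]
    have hlenp : p.length = P₁.length + P₂.length + 1 := by rw [hpdec]; simp; omega
    have hlenq : q.length = Q₁.length + Q₂.length + 1 := by rw [hqdec]; simp; omega
    constructor
    · refine mem_walksLe.mpr ⟨by simp, ?_, ?_, ?_⟩
      · simp only [length_append, length_cons]; omega
      · rw [head?_append_cons P₁ Q₂ P₂, ← hpdec]; exact hphead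
      · rw [getLast?_append_cons P₁ Q₂, ← getLast?_append_cons Q₁ Q₂, ← hqdec]; exact hqlast
    · refine mem_walksLe.mpr ⟨by simp, ?_, ?_, ?_⟩
      · simp only [length_append, length_cons]; omega
      · rw [head?_append_cons Q₁ P₂ Q₂, ← hqdec]; exact hqhead
      · rw [getLast?_append_cons Q₁ P₂, ← getLast?_append_cons P₁ P₂, ← hpdec]; exact hplast
  have hLHS : (∑ l ∈ walksLe N a1 b2, wt Q l) * (∑ l ∈ walksLe N a2 b1, wt Q l)
      = ∑ z ∈ S, F z := by
    rw [hS, Finset.sum_product, Finset.sum_mul_sum]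
  have hRHS : (∑ l ∈ walksLe (2 * N) a1 b1, wt Q l) * (∑ l ∈ walksLe (2 * N) a2 b2, wt Q l)
      = ∑ z ∈ T, F z := by
    rw [hT, Finset.sum_product, Finset.sum_mul_sum]
  rw [hLHS, hRHS]
  calc ∑ z ∈ S, F z = ∑ z ∈ S', F z := (Finset.sum_filter_ne_zero S).symm
    _ = ∑ z ∈ S'.image swapF, F z := by
        rw [Finset.sum_image ?_]
        · exact Finset.sum_congr rfl fun z hz => ((hmain z hz).2.1).symm
        · intro z1 h1 z2 h2 heq
          have e1 := (hmain z1 h1).2.2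
          have e2 := (hmain z2 h2).2.2
          rw [← e1, ← e2, heq]
    _ ≤ ∑ z ∈ T, F z := by
        refine Finset.sum_le_sum_of_subset_of_nonneg ?_ ?_
        · intro z hz
          obtain ⟨w, hw, rfl⟩ := Finset.mem_image.mp hz
          exact (hmain w hw).1
        · intro z _ _
          exact mul_nonneg (wt_nonneg hQ z.1) (wt_nonneg hQ z.2)

end Stmt18

/-- Total nonnegativity of a 2×2 minor of the walk matrix via loop-erased
switching (finite graph, 2×2 case).  Let `Q` be the nonnegative weighted
adjacency matrix of a finite directed network for which the walk matrix
`W = ∑_m Q^m` converges.  If every walk from `a1` to `b2` (a vertex sequence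
whose consecutive pairs carry positive weight) shares a vertex with every walk
from `a2` to `b1`, then `W(a1,b1)W(a2,b2) - W(a1,b2)W(a2,b1) ≥ 0`. -/
theorem stmt18 {V : Type*} [Fintype V] [DecidableEq V]
    (Q : Matrix V V ℝ) (hQ : ∀ i j, 0 ≤ Q i j)
    (W : Matrix V V ℝ) (hW : HasSum (fun m : ℕ => Q ^ m) W)
    (a1 a2 b1 b2 : V)
    (hcross : ∀ l l' : List V,
      l.Chain' (fun x y => 0 < Q x y) → l'.Chain' (fun x y => 0 < Q x y) →
      l.head? = some a1 → l.getLast? = some b2 →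
      l'.head? = some a2 → l'.getLast? = some b1 →
      ∃ x, x ∈ l ∧ x ∈ l') :
    0 ≤ W a1 b1 * W a2 b2 - W a1 b2 * W a2 b1 := by
  have hEnt : ∀ a b : V, HasSum (fun m : ℕ => (Q ^ m) a b) (W a b) :=
    fun a b => Pi.hasSum.mp (Pi.hasSum.mp hW a) b
  have hQn : ∀ (n : ℕ) (a b : V), 0 ≤ (Q ^ n) a b := by
    intro n
    induction n with
    | zero =>
      intro a b
      rw [pow_zero, Matrix.one_apply]
      split <;> norm_num
    | succ n ih =>
      intro a b
      rw [pow_succ, Matrix.mul_apply]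
      exact Finset.sum_nonneg fun c _ => mul_nonneg (ih a c) (hQ c b)
  have hWnn : ∀ a b : V, 0 ≤ W a b :=
    fun a b => hasSum_le (fun n => hQn n a b) hasSum_zero (hEnt a b)
  have hPart : ∀ (M : ℕ) (a b : V), ∑ n ∈ Finset.range M, (Q ^ n) a b ≤ W a b :=
    fun M a b => sum_le_hasSum _ (fun n _ => hQn n a b) (hEnt a b)
  have hPartnn : ∀ (M : ℕ) (a b : V), 0 ≤ ∑ n ∈ Finset.range M, (Q ^ n) a b :=
    fun M a b => Finset.sum_nonneg fun n _ => hQn n a b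
  have key : ∀ M : ℕ,
      (∑ n ∈ Finset.range M, (Q ^ n) a1 b2) * (∑ n ∈ Finset.range M, (Q ^ n) a2 b1) ≤
        W a1 b1 * W a2 b2 := by
    intro M
    calc (∑ n ∈ Finset.range M, (Q ^ n) a1 b2) * (∑ n ∈ Finset.range M, (Q ^ n) a2 b1)
        ≤ (∑ n ∈ Finset.range (2 * M), (Q ^ n) a1 b1) *
            (∑ n ∈ Finset.range (2 * M), (Q ^ n) a2 b2) := by
          rw [Stmt18.sum_range_pow_apply hQ, Stmt18.sum_range_pow_apply hQ,
            Stmt18.sum_range_pow_apply hQ, Stmt18.sum_range_pow_apply hQ]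
          exact Stmt18.key_ineq hQ a1 a2 b1 b2 hcross M
      _ ≤ W a1 b1 * W a2 b2 :=
          mul_le_mul (hPart _ _ _) (hPart _ _ _) (hPartnn _ _ _) (hWnn _ _)
  have htend : Filter.Tendsto
      (fun M => (∑ n ∈ Finset.range M, (Q ^ n) a1 b2) *
        (∑ n ∈ Finset.range M, (Q ^ n) a2 b1)) Filter.atTop
      (nhds (W a1 b2 * W a2 b1)) :=
    (hEnt a1 b2).tendsto_sum_nat.mul (hEnt a2 b1).tendsto_sum_nat
  have hle := le_of_tendsto' htend key
  linarith
end
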